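/- Let F be a real Hilbert space with inner product ⟨·,·⟩, V a real vector space, and let D : F → V and R : V → F be linear maps satisfying D ∘ R = id_V. Define W f := f − R(D f), the inner product ⟨⟨f, g⟩⟩ := ⟨W f, W g⟩ + ⟨R(D f), R(D g)⟩, and the norm |||f||| := √⟨⟨f,f⟩⟩. Then for every f ∈ F, D f is the unique minimizer over v ∈ V of |||f − R v|||²; in fact |||f − R v|||² = |||W f|||² + |||R(D f − v)|||² for all v ∈ V. Hence every consistent pair of linear discretization and reconstruction operators arises as a best-approximation (argmin) discretization for a suitable inner product on F. -/

import Mathlib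

/-- With D ∘ R = id, W f := f − R(D f),
⟨⟨f,g⟩⟩ := ⟨W f, W g⟩ + ⟨R(D f), R(D g)⟩ and |||f||| := √⟨⟨f,f⟩⟩, one has
|||f − R v|||² = |||W f|||² + |||R(D f − v)|||² for all v, and D f is the
unique minimizer over v ∈ V of |||f − R v|||². -/
theorem stmt_10
    {F V : Type*} [NormedAddCommGroup F] [InnerProductSpace ℝ F] [CompleteSpace F]
    [AddCommGroup V] [Module ℝ V]
    (D : F →ₗ[ℝ] V) (R : V →ₗ[ℝ] F)
    (hDR : ∀ v : V, D (R v) = v)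
    (W : F → F) (hW : ∀ f : F, W f = f - R (D f))
    (p : F → F → ℝ)
    (hp : ∀ f g : F, p f g = (inner ℝ (W f) (W g) : ℝ) + inner ℝ (R (D f)) (R (D g)))
    (N : F → ℝ) (hN : ∀ f : F, N f = Real.sqrt (p f f)) :
    ∀ f : F,
      (∀ v : V, N (f - R v) ^ 2 = N (W f) ^ 2 + N (R (D f - v)) ^ 2) ∧
      (∀ v : V, N (f - R (D f)) ^ 2 ≤ N (f - R v) ^ 2) ∧
      (∀ v : V, N (f - R v) ^ 2 = N (f - R (D f)) ^ 2 → v = D f) := by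
  intro f
  -- p g g is a sum of two squared norms, hence nonneg, and N g ^ 2 = p g g
  have hpeq : ∀ g : F, p g g = ‖W g‖ ^ 2 + ‖R (D g)‖ ^ 2 := by
    intro g
    rw [hp, real_inner_self_eq_norm_sq, real_inner_self_eq_norm_sq]
  have hpnn : ∀ g : F, 0 ≤ p g g := by
    intro g; rw [hpeq]; positivity
  have hN2 : ∀ g : F, N g ^ 2 = p g g := by
    intro g; rw [hN, Real.sq_sqrt (hpnn g)]
  -- key computations
  have hWsub : ∀ v : V, W (f - R v) = W f := by
    intro v
    simp only [hW, map_sub, hDR, map_sub]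
    abel
  have hRDsub : ∀ v : V, R (D (f - R v)) = R (D f - v) := by
    intro v
    simp [hDR]
  have hWW : W (W f) = W f := by
    have : D (W f) = 0 := by simp [hW, hDR]
    rw [hW (W f), this]; simp
  have hRDW : R (D (W f)) = 0 := by
    have : D (W f) = 0 := by simp [hW, hDR]
    rw [this]; simp
  have hmain : ∀ v : V, N (f - R v) ^ 2 = N (W f) ^ 2 + N (R (D f - v)) ^ 2 := by
    intro v
    have h1 : N (f - R v) ^ 2 = ‖W f‖ ^ 2 + ‖R (D f - v)‖ ^ 2 := by
      rw [hN2, hpeq, hWsub, hRDsub]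
    have h2 : N (W f) ^ 2 = ‖W f‖ ^ 2 := by
      rw [hN2, hpeq, hWW, hRDW]; simp
    have h3 : N (R (D f - v)) ^ 2 = ‖R (D f - v)‖ ^ 2 := by
      have hWr : W (R (D f - v)) = 0 := by simp [hW, hDR]
      have hRr : R (D (R (D f - v))) = R (D f - v) := by rw [hDR]
      rw [hN2, hpeq, hWr, hRr]; simp
    rw [h1, h2, h3]
  refine ⟨hmain, ?_, ?_⟩
  · intro v
    have hDf := hmain (D f)
    have hv := hmain v
    have : N (R (D f - D f)) ^ 2 = 0 := by
      simp only [sub_self, map_zero]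
      rw [hN2, hpeq]
      simp [hW]
    rw [hDf, hv, this]
    have : (0:ℝ) ≤ N (R (D f - v)) ^ 2 := by rw [hN2]; exact hpnn _
    linarith
  · intro v hveq
    have hDf := hmain (D f)
    have hz : N (R (D f - D f)) ^ 2 = 0 := by
      simp only [sub_self, map_zero]
      rw [hN2, hpeq]
      simp [hW]
    rw [hmain v, hDf, hz, add_zero] at hveq
    have hnorm : ‖R (D f - v)‖ ^ 2 = 0 := by
      have hWr : W (R (D f - v)) = 0 := by simp [hW, hDR]
      have hRr : R (D (R (D f - v))) = R (D f - v) := by rw [hDR]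
      have h0 : N (R (D f - v)) ^ 2 = 0 := by linarith
      rw [hN2, hpeq, hWr, hRr] at h0
      simpa using h0
    have hR0 : R (D f - v) = 0 := by
      have := pow_eq_zero_iff (n := 2) (by norm_num) |>.mp hnorm
      exact norm_eq_zero.mp this
    have := congrArg D hR0
    rw [hDR] at this
    simp at this
    rw [sub_eq_zero] at this
    exact this.symm
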